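/- The function g(x) = 1/sinh(x) − 1/x (for x > 0) has derivative g'(x) > 0 for all x > 0. -/

import Mathlib

/-!
Since `f x = 1 / (x sinh x) - 1 / x²`, one computes
`f' x = (2 sinh² x - x sinh x - x² cosh x) / (x³ sinh² x)`, so it suffices that
`x² cosh x < 2 sinh² x - x sinh x` for `x > 0`. Both sides are positive; squaring and using
`cosh² x = 1 + sinh² x`, this becomes the polynomial inequality `x⁴ (1 + s²) < s² (2 s - x)²` in
`s = sinh x`, which follows from the Taylor bound `x + x³/6 ≤ sinh x`.
-/

open Real Finset

/-- `f(x) = (1/sinh x − 1/x)/x`. -/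
noncomputable def fAux (x : ℝ) : ℝ := (1 / Real.sinh x - 1 / x) / x

lemma Real.add_pow_three_div_six_le_sinh {x : ℝ} (hx : 0 ≤ x) : x + x ^ 3 / 6 ≤ sinh x := by
  have h := sum_le_hasSum (range 2) (fun n _ => by positivity) (hasSum_sinh x)
  norm_num [sum_range_succ, Nat.factorial] at h
  linarith

lemma pow_four_mul_one_add_sq_lt {x s : ℝ} (hx : 0 < x) (hs : x + x ^ 3 / 6 ≤ s) :
    x ^ 4 * (1 + s ^ 2) < (2 * s ^ 2 - x * s) ^ 2 := by
  have hs₀ : 0 < x + x ^ 3 / 6 := by positivity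
  have hsq : (x + x ^ 3 / 6) ^ 2 ≤ s ^ 2 := pow_le_pow_left₀ hs₀.le hs 2
  have hsq' : (x + x ^ 3 / 3) ^ 2 ≤ (2 * s - x) ^ 2 :=
    pow_le_pow_left₀ (by positivity) (by linarith) 2
  have hb : 0 < (x + x ^ 3 / 3) ^ 2 - x ^ 4 := by
    nlinarith [sq_nonneg (x ^ 3 / 3 - x / 2), pow_pos hx 2]
  -- `(x + x³/6)² ((x + x³/3)² - x⁴) - x⁴ = x⁸/36 + x¹⁰/36 + x¹²/324`
  calc x ^ 4 * (1 + s ^ 2)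
      < (x + x ^ 3 / 6) ^ 2 * ((x + x ^ 3 / 3) ^ 2 - x ^ 4) - x ^ 4 + x ^ 4 * (1 + s ^ 2) := by
        nlinarith [pow_pos hx 8, pow_pos hx 10, pow_pos hx 12]
    _ ≤ s ^ 2 * ((2 * s - x) ^ 2 - x ^ 4) - x ^ 4 + x ^ 4 * (1 + s ^ 2) := by gcongr
    _ = (2 * s ^ 2 - x * s) ^ 2 := by ring

lemma Real.sq_mul_cosh_lt_two_mul_sinh_sq_sub_mul_sinh {x : ℝ} (hx : 0 < x) :
    x ^ 2 * cosh x < 2 * sinh x ^ 2 - x * sinh x := by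
  have hpos : 0 < 2 * sinh x ^ 2 - x * sinh x := by
    have : x < sinh x := self_lt_sinh_iff.2 hx
    nlinarith
  refine lt_of_pow_lt_pow_left₀ 2 hpos.le ?_
  rw [mul_pow, cosh_sq', ← pow_mul]
  exact pow_four_mul_one_add_sq_lt hx (add_pow_three_div_six_le_sinh hx.le)

lemma hasDerivAt_fAux {x : ℝ} (hx : x ≠ 0) :
    HasDerivAt fAux ((2 * sinh x ^ 2 - x * sinh x - x ^ 2 * cosh x) / (x ^ 3 * sinh x ^ 2)) x := by
  have hs : sinh x ≠ 0 := sinh_ne_zero.2 hx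
  refine ((((hasDerivAt_const x 1).div (hasDerivAt_sinh x) hs).sub
    ((hasDerivAt_const x 1).div (hasDerivAt_id x) hx)).div (hasDerivAt_id x) hx).congr_deriv ?_
  simp only [id, Pi.sub_apply, Pi.div_apply]
  field_simp
  ring

/-- The function `f(x) = (1/sinh x − 1/x)/x` satisfies `f'(x) > 0`
for all `x > 0` (the monotonicity fact used in the integration-by-parts estimates). -/
theorem stmt5 : ∀ x : ℝ, 0 < x → 0 < deriv fAux x := by
  intro x hx
  rw [(hasDerivAt_fAux hx.ne').deriv]
  have := sq_mul_cosh_lt_two_mul_sinh_sq_sub_mul_sinh hx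
  exact div_pos (by linarith) (by positivity)
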